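/- arXiv:1811.01497 — 2 statements merged into one kernel-verified Lean document; each statement's English description precedes it below -/
import Mathlib

section
/- On the graded mesh t_i = (i/n)^r T with step sizes τ_i = t_{i+1} - t_i, the weighted coefficients are monotone: τ_{j+1}^{-α} a_{j+1,l} > τ_j^{-α} a_{j,l} for all 0 ≤ j ≤ l-2 and l ≥ 2. -/
/-! After factoring out the common scale `T / n ^ r`, the weighted coefficient
`τ_j ^ (-α) * a_{j,l}` is the slope of the strictly concave function `s ↦ s ^ (1 - α)` over
`[l ^ r - (j + 1) ^ r, l ^ r - j ^ r]`. Shifting `j` to `j + 1` moves this interval to the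
adjacent one on its left, where the slope of a strictly concave function is larger. -/

noncomputable def gradedCoef (r α : ℝ) (j l : ℕ) : ℝ :=
  (((l : ℝ) ^ r - (j : ℝ) ^ r) / (((j : ℝ) + 1) ^ r - (j : ℝ) ^ r)) ^ (1 - α) -
  (((l : ℝ) ^ r - ((j : ℝ) + 1) ^ r) / (((j : ℝ) + 1) ^ r - (j : ℝ) ^ r)) ^ (1 - α)

noncomputable def meshPt (r T : ℝ) (n i : ℕ) : ℝ := ((i : ℝ) / (n : ℝ)) ^ r * T

noncomputable def meshStep (r T : ℝ) (n i : ℕ) : ℝ := meshPt r T n (i + 1) - meshPt r T n i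

theorem meshStep_eq (r T : ℝ) (n i : ℕ) :
    meshStep r T n i = T / (n : ℝ) ^ r * (((i : ℝ) + 1) ^ r - (i : ℝ) ^ r) := by
  simp only [meshStep, meshPt, Nat.cast_add_one]
  rw [Real.div_rpow (by positivity) (Nat.cast_nonneg n), Real.div_rpow (Nat.cast_nonneg i)
    (Nat.cast_nonneg n)]
  ring

theorem Real.rpow_neg_mul_sub_div_rpow_sub {α c x y A : ℝ} (hc : 0 ≤ c) (hxy : x < y)
    (hyA : y ≤ A) :
    (c * (y - x)) ^ (-α) * (((A - x) / (y - x)) ^ (1 - α) - ((A - y) / (y - x)) ^ (1 - α)) =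
      c ^ (-α) * (((A - x) ^ (1 - α) - (A - y) ^ (1 - α)) / (y - x)) := by
  have hd : 0 < y - x := sub_pos.mpr hxy
  have hd_rpow : (y - x) ^ (-α) * (y - x) = (y - x) ^ (1 - α) := by
    rw [← Real.rpow_add_one hd.ne', neg_add_eq_sub]
  rw [Real.mul_rpow hc hd.le, Real.div_rpow (by linarith) hd.le,
    Real.div_rpow (by linarith) hd.le, ← hd_rpow]
  field_simp

theorem meshStep_rpow_neg_mul_gradedCoef {α r T : ℝ} (hr : 0 < r) (hT : 0 ≤ T) (n : ℕ)
    {j l : ℕ} (hjl : j + 1 ≤ l) :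
    meshStep r T n j ^ (-α) * gradedCoef r α j l =
      (T / (n : ℝ) ^ r) ^ (-α) *
        ((((l : ℝ) ^ r - (j : ℝ) ^ r) ^ (1 - α) -
            ((l : ℝ) ^ r - ((j : ℝ) + 1) ^ r) ^ (1 - α)) /
          (((j : ℝ) + 1) ^ r - (j : ℝ) ^ r)) := by
  have hjl' : (j : ℝ) + 1 ≤ l := by exact_mod_cast hjl
  rw [meshStep_eq, gradedCoef]
  exact Real.rpow_neg_mul_sub_div_rpow_sub (by positivity)
    (Real.rpow_lt_rpow (Nat.cast_nonneg j) (lt_add_one _) hr)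
    (Real.rpow_le_rpow (by positivity) hjl' hr.le)

theorem weighted_coef_monotone_general (α r T : ℝ) (hα0 : 0 < α) (hα1 : α < 1) (hr : 1 ≤ r)
    (hT : 0 < T) (n : ℕ) (hn : 1 ≤ n) (l : ℕ) (hl : 2 ≤ l)
    (j : ℕ) (hj : j ≤ l - 2) :
    meshStep r T n j ^ (-α) * gradedCoef r α j l <
    meshStep r T n (j + 1) ^ (-α) * gradedCoef r α (j + 1) l := by
  have hr0 : 0 < r := by linarith
  have hjl : (j : ℝ) + 1 + 1 ≤ l := by exact_mod_cast (by omega : j + 1 + 1 ≤ l)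
  rw [meshStep_rpow_neg_mul_gradedCoef hr0 hT.le n (by omega),
    meshStep_rpow_neg_mul_gradedCoef hr0 hT.le n (by omega)]
  have hn0 : (0 : ℝ) < n := by exact_mod_cast hn
  refine mul_lt_mul_of_pos_left ?_ (by positivity)
  have h01 := Real.rpow_lt_rpow (Nat.cast_nonneg j) (lt_add_one (j : ℝ)) hr0
  have h12 := Real.rpow_lt_rpow (by positivity) (lt_add_one ((j : ℝ) + 1)) hr0
  have h2l := Real.rpow_le_rpow (by positivity) hjl hr0.le
  have hconcave := Real.strictConcaveOn_rpow (p := 1 - α) (by linarith) (by linarith)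
  have hslope := hconcave.slope_anti_adjacent
    (x := (l : ℝ) ^ r - ((j : ℝ) + 1 + 1) ^ r) (y := (l : ℝ) ^ r - ((j : ℝ) + 1) ^ r)
    (z := (l : ℝ) ^ r - (j : ℝ) ^ r) (Set.mem_Ici.mpr (by linarith))
    (Set.mem_Ici.mpr (by linarith)) (by linarith) (by linarith)
  simp only [sub_sub_sub_cancel_left] at hslope
  simpa only [Nat.cast_add_one] using hslope

theorem weighted_coef_monotone (α r T : ℝ) (hα0 : 0 < α) (hα1 : α < 1) (hr : 1 ≤ r)
    (hT : 0 < T) (n : ℕ) (hn : 1 ≤ n) (l : ℕ) (hl : 2 ≤ l) (hln : l ≤ n)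
    (j : ℕ) (hj : j ≤ l - 2) :
    meshStep r T n j ^ (-α) * gradedCoef r α j l <
    meshStep r T n (j + 1) ^ (-α) * gradedCoef r α (j + 1) l :=
  weighted_coef_monotone_general α r T hα0 hα1 hr hT n hn l hl j hj
end

section
/- Stability of the implicit scheme: under the mesh condition h < 2D/v, for the implicit finite difference scheme (with graded time mesh and L1-type Caputo discretization) for the time-fractional advection-diffusion equation, perturbations of the initial data do not grow: if Y and Ỹ are scheme solutions with initial data differing by E⁰, then for every time level l, max_{1≤i≤K-1}|Y_i^l - Ỹ_i^l| ≤ max_{1≤i≤K-1}|Y_i^0 - Ỹ_i^0|. -/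
lemma abel_sum (c e : ℕ → ℝ) (m : ℕ) :
    ∑ j ∈ Finset.range (m+1), c j * (e (j+1) - e j)
      = c m * e (m+1) - c 0 * e 0 - ∑ j ∈ Finset.range m, (c (j+1) - c j) * e (j+1) := by
  induction m with
  | zero => simp; ring
  | succ k ih => rw [Finset.sum_range_succ, ih, Finset.sum_range_succ]; ring

lemma c_formula (α r T : ℝ) (hα1 : α < 1) (hr : 1 ≤ r) (hT : 0 < T)
    (n : ℕ) (hn : 1 ≤ n) (l j : ℕ) (hjl : j + 1 ≤ l) :
    meshStep r T n j ^ (-α) * gradedCoef r α j l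
      = (T / (n:ℝ) ^ r) ^ (-α) *
        ((((l:ℝ) ^ r - (j:ℝ) ^ r) ^ (1-α) - ((l:ℝ) ^ r - ((j:ℝ)+1) ^ r) ^ (1-α))
          / (((j:ℝ)+1) ^ r - (j:ℝ) ^ r)) := by
  have hr0 : (0:ℝ) < r := by linarith
  have hn0 : (0:ℝ) < n := by exact_mod_cast hn
  have hd : (0:ℝ) < ((j:ℝ)+1) ^ r - (j:ℝ) ^ r := by
    have := Real.rpow_lt_rpow (x := (j:ℝ)) (y := (j:ℝ)+1) (j.cast_nonneg) (by linarith) hr0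
    linarith
  have hs1 : (0:ℝ) ≤ (l:ℝ) ^ r - ((j:ℝ)+1) ^ r := by
    have hle : ((j:ℝ)+1) ≤ (l:ℝ) := by exact_mod_cast hjl
    have := Real.rpow_le_rpow (by positivity) hle hr0.le
    linarith
  have hs0 : (0:ℝ) ≤ (l:ℝ) ^ r - (j:ℝ) ^ r := by linarith
  have hms : meshStep r T n j = (T / (n:ℝ) ^ r) * (((j:ℝ)+1) ^ r - (j:ℝ) ^ r) := by
    unfold meshStep meshPt
    rw [Real.div_rpow (by positivity) hn0.le, Real.div_rpow (by positivity) hn0.le]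
    push_cast
    have hnr : ((n:ℝ)) ^ r ≠ 0 := by positivity
    field_simp
  have hgc : gradedCoef r α j l
      = (((l:ℝ) ^ r - (j:ℝ) ^ r) ^ (1-α) - ((l:ℝ) ^ r - ((j:ℝ)+1) ^ r) ^ (1-α))
        / (((j:ℝ)+1) ^ r - (j:ℝ) ^ r) ^ (1-α) := by
    unfold gradedCoef
    rw [Real.div_rpow hs0 hd.le, Real.div_rpow hs1 hd.le]
    ring
  rw [hms, hgc, Real.mul_rpow (by positivity) hd.le]
  have h2 : (((j:ℝ)+1) ^ r - (j:ℝ) ^ r) ^ (-α)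
      = (((j:ℝ)+1) ^ r - (j:ℝ) ^ r) ^ (1-α) / (((j:ℝ)+1) ^ r - (j:ℝ) ^ r) := by
    rw [eq_div_iff hd.ne', ← Real.rpow_add_one hd.ne']
    congr 1
    ring
  rw [h2]
  have hA : (0:ℝ) < (((j:ℝ)+1) ^ r - (j:ℝ) ^ r) ^ (1-α) := Real.rpow_pos_of_pos hd _
  field_simp

lemma c_pos (α r T : ℝ) (hα0 : 0 < α) (hα1 : α < 1) (hr : 1 ≤ r) (hT : 0 < T)
    (n : ℕ) (hn : 1 ≤ n) (l j : ℕ) (hjl : j + 1 ≤ l) :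
    0 < meshStep r T n j ^ (-α) * gradedCoef r α j l := by
  have hr0 : (0:ℝ) < r := by linarith
  have hn0 : (0:ℝ) < n := by exact_mod_cast hn
  rw [c_formula α r T hα1 hr hT n hn l j hjl]
  have hd : (0:ℝ) < ((j:ℝ)+1) ^ r - (j:ℝ) ^ r := by
    have := Real.rpow_lt_rpow (x := (j:ℝ)) (y := (j:ℝ)+1) (j.cast_nonneg) (by linarith) hr0
    linarith
  have hs1 : (0:ℝ) ≤ (l:ℝ) ^ r - ((j:ℝ)+1) ^ r := by
    have hle : ((j:ℝ)+1) ≤ (l:ℝ) := by exact_mod_cast hjl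
    have := Real.rpow_le_rpow (by positivity) hle hr0.le
    linarith
  have hnum : ((l:ℝ) ^ r - ((j:ℝ)+1) ^ r) ^ (1-α) < ((l:ℝ) ^ r - (j:ℝ) ^ r) ^ (1-α) :=
    Real.rpow_lt_rpow hs1 (by linarith) (by linarith)
  exact mul_pos (Real.rpow_pos_of_pos (by positivity) _) (div_pos (by linarith) hd)

lemma c_mono (α r T : ℝ) (hα0 : 0 < α) (hα1 : α < 1) (hr : 1 ≤ r) (hT : 0 < T)
    (n : ℕ) (hn : 1 ≤ n) (l j : ℕ) (hjl : j + 2 ≤ l) :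
    meshStep r T n j ^ (-α) * gradedCoef r α j l
      ≤ meshStep r T n (j+1) ^ (-α) * gradedCoef r α (j+1) l := by
  have hr0 : (0:ℝ) < r := by linarith
  rw [c_formula α r T hα1 hr hT n hn l j (by omega),
      c_formula α r T hα1 hr hT n hn l (j+1) (by omega)]
  push_cast
  apply mul_le_mul_of_nonneg_left _ (Real.rpow_pos_of_pos (by positivity) _).le
  -- slope inequality from concavity of x ^ (1-α)
  have hs2lt : ((l:ℝ) ^ r - ((j:ℝ)+1+1) ^ r) < ((l:ℝ) ^ r - ((j:ℝ)+1) ^ r) := by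
    have := Real.rpow_lt_rpow (x := (j:ℝ)+1) (y := (j:ℝ)+1+1) (by positivity) (by linarith) hr0
    linarith
  have hs1lt : ((l:ℝ) ^ r - ((j:ℝ)+1) ^ r) < ((l:ℝ) ^ r - (j:ℝ) ^ r) := by
    have := Real.rpow_lt_rpow (x := (j:ℝ)) (y := (j:ℝ)+1) (j.cast_nonneg) (by linarith) hr0
    linarith
  have hs2 : (0:ℝ) ≤ (l:ℝ) ^ r - ((j:ℝ)+1+1) ^ r := by
    have hle : ((j:ℝ)+1+1) ≤ (l:ℝ) := by exact_mod_cast hjl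
    have := Real.rpow_le_rpow (by positivity) hle hr0.le
    linarith
  have hs0 : (0:ℝ) ≤ (l:ℝ) ^ r - (j:ℝ) ^ r := by linarith
  have hslope := (Real.concaveOn_rpow (p := 1-α) (by linarith) (by linarith)).slope_anti_adjacent
    (x := (l:ℝ) ^ r - ((j:ℝ)+1+1) ^ r) (y := (l:ℝ) ^ r - ((j:ℝ)+1) ^ r)
    (z := (l:ℝ) ^ r - (j:ℝ) ^ r) hs2 hs0 hs2lt hs1lt
  have e1 : ((l:ℝ) ^ r - (j:ℝ) ^ r) - ((l:ℝ) ^ r - ((j:ℝ)+1) ^ r) = ((j:ℝ)+1) ^ r - (j:ℝ) ^ r := by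
    ring
  have e2 : ((l:ℝ) ^ r - ((j:ℝ)+1) ^ r) - ((l:ℝ) ^ r - ((j:ℝ)+1+1) ^ r)
      = ((j:ℝ)+1+1) ^ r - ((j:ℝ)+1) ^ r := by ring
  rw [e1, e2] at hslope
  exact hslope


/-- `Y` is a solution of the implicit L1 graded-mesh scheme for the time-fractional
advection-diffusion equation with source term `F` and homogeneous Dirichlet
boundary conditions. -/
def IsSchemeSolution (α r T v D h : ℝ) (n K : ℕ) (F Y : ℕ → ℕ → ℝ) : Prop :=
  (∀ l, 1 ≤ l → l ≤ n → ∀ i, 1 ≤ i → i ≤ K - 1 →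
    (1 / Real.Gamma (2 - α)) *
      ∑ j ∈ Finset.range l,
        meshStep r T n j ^ (-α) * gradedCoef r α j l * (Y i (j + 1) - Y i j) =
      -v * (Y (i + 1) l - Y (i - 1) l) / (2 * h) +
        D * (Y (i + 1) l - 2 * Y i l + Y (i - 1) l) / h ^ 2 + F i l) ∧
  (∀ l, 1 ≤ l → l ≤ n → Y 0 l = 0 ∧ Y K l = 0)

set_option maxHeartbeats 1000000 in
theorem scheme_stability (α r T v D L : ℝ) (hα0 : 0 < α) (hα1 : α < 1) (hr : 1 ≤ r)
    (hT : 0 < T) (hv : 0 < v) (hD : 0 < D) (hL : 0 < L)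
    (n K : ℕ) (hn : 1 ≤ n) (hK : 2 ≤ K) (h : ℝ) (hh : h = L / K)
    (hmesh : h < 2 * D / v)
    (F Y Ytil : ℕ → ℕ → ℝ)
    (hY : IsSchemeSolution α r T v D h n K F Y)
    (hYtil : IsSchemeSolution α r T v D h n K F Ytil)
    (E0 : ℝ) (hE0 : ∀ i, 1 ≤ i → i ≤ K - 1 → |Y i 0 - Ytil i 0| ≤ E0) :
    ∀ l, 1 ≤ l → l ≤ n → ∀ i, 1 ≤ i → i ≤ K - 1 → |Y i l - Ytil i l| ≤ E0 := by
  obtain ⟨hYe, hYb⟩ := hY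
  obtain ⟨hZe, hZb⟩ := hYtil
  have hK1 : 1 ≤ K - 1 := by omega
  have hKpos : (0:ℝ) < K := by exact_mod_cast (by omega : 0 < K)
  have hh0 : 0 < h := by rw [hh]; positivity
  have hΓ : 0 < Real.Gamma (2 - α) := Real.Gamma_pos_of_pos (by linarith)
  have hB : 0 ≤ D / h ^ 2 - v / (2 * h) := by
    have hvh : h * v < 2 * D := (lt_div_iff₀ hv).mp hmesh
    rw [sub_nonneg, div_le_div_iff₀ (by positivity) (by positivity)]
    nlinarith
  have hC : 0 ≤ D / h ^ 2 + v / (2 * h) := by positivity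
  suffices H : ∀ l, l ≤ n → ∀ i, 1 ≤ i → i ≤ K - 1 → |Y i l - Ytil i l| ≤ E0 by
    intro l _ hln i a b; exact H l hln i a b
  intro l
  induction l using Nat.strong_induction_on with
  | _ l IH =>
    intro hln i hi1 hi2
    rcases Nat.eq_zero_or_pos l with rfl | hl1
    · exact hE0 i hi1 hi2
    obtain ⟨m, rfl⟩ : ∃ m, l = m + 1 := ⟨l - 1, by omega⟩
    set e : ℕ → ℕ → ℝ := fun i l => Y i l - Ytil i l with he
    set c : ℕ → ℝ := fun j => meshStep r T n j ^ (-α) * gradedCoef r α j (m+1) with hc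
    have hcpos : ∀ j, j + 1 ≤ m + 1 → 0 < c j := fun j hj =>
      c_pos α r T hα0 hα1 hr hT n hn (m+1) j hj
    have hcmono : ∀ j, j + 2 ≤ m + 1 → c j ≤ c (j+1) := fun j hj =>
      c_mono α r T hα0 hα1 hr hT n hn (m+1) j hj
    have hcm : 0 < c m := hcpos m le_rfl
    obtain ⟨i₀, hi₀m, hmaxm⟩ := Finset.exists_max_image (Finset.Icc 1 (K-1))
      (fun i => |e i (m+1)|) ⟨1, Finset.mem_Icc.2 ⟨le_rfl, hK1⟩⟩
    rw [Finset.mem_Icc] at hi₀m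
    set M := |e i₀ (m+1)| with hM
    have hmax : ∀ i', 1 ≤ i' → i' ≤ K - 1 → |e i' (m+1)| ≤ M := fun i' a b =>
      hmaxm i' (Finset.mem_Icc.2 ⟨a, b⟩)
    have hMnn : 0 ≤ M := abs_nonneg _
    have hplus : |e (i₀+1) (m+1)| ≤ M := by
      rcases le_or_gt (i₀+1) (K-1) with hcase | hcase
      · exact hmax _ (by omega) hcase
      · have hiK : i₀ + 1 = K := by omega
        rw [hiK]
        simp only [he]
        rw [(hYb (m+1) (by omega) hln).2, (hZb (m+1) (by omega) hln).2]
        simpa using hMnn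
    have hminus : |e (i₀-1) (m+1)| ≤ M := by
      rcases le_or_gt 1 (i₀-1) with hcase | hcase
      · exact hmax _ hcase (by omega)
      · have hi0 : i₀ - 1 = 0 := by omega
        rw [hi0]
        simp only [he]
        rw [(hYb (m+1) (by omega) hln).1, (hZb (m+1) (by omega) hln).1]
        simpa using hMnn
    have hhist : ∀ j, j ≤ m → |e i₀ j| ≤ E0 := by
      intro j hj
      rcases Nat.eq_zero_or_pos j with rfl | hj1
      · exact hE0 i₀ hi₀m.1 hi₀m.2
      · exact IH j (by omega) (by omega) i₀ hi₀m.1 hi₀m.2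
    have hE0nn : 0 ≤ E0 := le_trans (abs_nonneg _) (hhist 0 (by omega))
    have h1 := hYe (m+1) (by omega) hln i₀ hi₀m.1 hi₀m.2
    have h2 := hZe (m+1) (by omega) hln i₀ hi₀m.1 hi₀m.2
    have hsum : ∑ j ∈ Finset.range (m+1), c j * (e i₀ (j+1) - e i₀ j)
        = (∑ j ∈ Finset.range (m+1),
            meshStep r T n j ^ (-α) * gradedCoef r α j (m+1) * (Y i₀ (j+1) - Y i₀ j))
          - ∑ j ∈ Finset.range (m+1),
            meshStep r T n j ^ (-α) * gradedCoef r α j (m+1) * (Ytil i₀ (j+1) - Ytil i₀ j) := by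
      rw [← Finset.sum_sub_distrib]
      refine Finset.sum_congr rfl fun j _ => ?_
      simp only [he, hc]
      ring
    have heq : (1 / Real.Gamma (2 - α)) * ∑ j ∈ Finset.range (m+1), c j * (e i₀ (j+1) - e i₀ j)
        = -v * (e (i₀+1) (m+1) - e (i₀-1) (m+1)) / (2 * h)
          + D * (e (i₀+1) (m+1) - 2 * e i₀ (m+1) + e (i₀-1) (m+1)) / h ^ 2 := by
      rw [hsum]
      simp only [he]
      linear_combination h1 - h2
    rw [abel_sum] at heq
    set S := ∑ j ∈ Finset.range m, (c (j+1) - c j) * e i₀ (j+1) with hS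
    have key : (c m / Real.Gamma (2 - α) + 2 * D / h ^ 2) * e i₀ (m+1)
        = (D / h ^ 2 - v / (2 * h)) * e (i₀+1) (m+1)
          + (D / h ^ 2 + v / (2 * h)) * e (i₀-1) (m+1)
          + (1 / Real.Gamma (2 - α)) * (c 0 * e i₀ 0 + S) := by
      linear_combination heq
    have hSb : |c 0 * e i₀ 0 + S| ≤ c m * E0 := by
      have step1 : |c 0 * e i₀ 0 + S| ≤ |c 0 * e i₀ 0| + |S| := abs_add_le _ _
      have step2 : |c 0 * e i₀ 0| ≤ c 0 * E0 := by
        rw [abs_mul, abs_of_nonneg (hcpos 0 (by omega)).le]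
        exact mul_le_mul_of_nonneg_left (hhist 0 (by omega)) (hcpos 0 (by omega)).le
      have step3 : |S| ≤ ∑ j ∈ Finset.range m, (c (j+1) - c j) * E0 := by
        refine le_trans (Finset.abs_sum_le_sum_abs _ _) (Finset.sum_le_sum fun j hj => ?_)
        rw [Finset.mem_range] at hj
        have hw : 0 ≤ c (j+1) - c j := sub_nonneg.2 (hcmono j (by omega))
        rw [abs_mul, abs_of_nonneg hw]
        exact mul_le_mul_of_nonneg_left (hhist (j+1) (by omega)) hw
      have step4 : ∑ j ∈ Finset.range m, (c (j+1) - c j) * E0 = (c m - c 0) * E0 := by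
        rw [← Finset.sum_mul, Finset.sum_range_sub]
      nlinarith [step1, step2, step3]
    have hQnn : 0 ≤ c m / Real.Gamma (2 - α) + 2 * D / h ^ 2 := by
      have : 0 ≤ c m / Real.Gamma (2 - α) := le_of_lt (div_pos hcm hΓ)
      have h2D : 0 ≤ 2 * D / h ^ 2 := by positivity
      linarith
    have habs : (c m / Real.Gamma (2 - α) + 2 * D / h ^ 2) * M
        ≤ (D / h ^ 2 - v / (2 * h)) * M + (D / h ^ 2 + v / (2 * h)) * M
          + (1 / Real.Gamma (2 - α)) * (c m * E0) := by
      calc (c m / Real.Gamma (2 - α) + 2 * D / h ^ 2) * M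
          = |(c m / Real.Gamma (2 - α) + 2 * D / h ^ 2) * e i₀ (m+1)| := by
            rw [abs_mul, abs_of_nonneg hQnn]
        _ = |(D / h ^ 2 - v / (2 * h)) * e (i₀+1) (m+1)
              + (D / h ^ 2 + v / (2 * h)) * e (i₀-1) (m+1)
              + (1 / Real.Gamma (2 - α)) * (c 0 * e i₀ 0 + S)| := by rw [key]
        _ ≤ |(D / h ^ 2 - v / (2 * h)) * e (i₀+1) (m+1)|
              + |(D / h ^ 2 + v / (2 * h)) * e (i₀-1) (m+1)|
              + |(1 / Real.Gamma (2 - α)) * (c 0 * e i₀ 0 + S)| := abs_add_three _ _ _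
        _ ≤ (D / h ^ 2 - v / (2 * h)) * M + (D / h ^ 2 + v / (2 * h)) * M
              + (1 / Real.Gamma (2 - α)) * (c m * E0) := by
            refine add_le_add (add_le_add ?_ ?_) ?_
            · rw [abs_mul, abs_of_nonneg hB]
              exact mul_le_mul_of_nonneg_left hplus hB
            · rw [abs_mul, abs_of_nonneg hC]
              exact mul_le_mul_of_nonneg_left hminus hC
            · rw [abs_mul, abs_of_nonneg (by positivity : (0:ℝ) ≤ 1 / Real.Gamma (2 - α))]
              exact mul_le_mul_of_nonneg_left hSb (by positivity)
    have hfinal : c m / Real.Gamma (2 - α) * M ≤ c m / Real.Gamma (2 - α) * E0 := by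
      have e1 : (c m / Real.Gamma (2 - α) + 2 * D / h ^ 2) * M
          = c m / Real.Gamma (2 - α) * M + (2 * D / h ^ 2) * M := by ring
      have e2 : (D / h ^ 2 - v / (2 * h)) * M + (D / h ^ 2 + v / (2 * h)) * M
          = (2 * D / h ^ 2) * M := by ring
      have e3 : (1 / Real.Gamma (2 - α)) * (c m * E0) = c m / Real.Gamma (2 - α) * E0 := by
        ring
      linarith [habs]
    have hME : M ≤ E0 := le_of_mul_le_mul_left hfinal (div_pos hcm hΓ)
    exact le_trans (hmax i hi1 hi2) hME
end
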